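/- arXiv:2505.12598 — 3 statements merged into one kernel-verified Lean document; each statement's English description precedes it below -/
import Mathlib

section
/- For p > 2 and real s ∈ [0,1], if x(s) := s·a + (1-s)·b for vectors a, b in R^K, then the derivative in s of |x(s)|^{p-2} x(s) exists for every s (including where x(s) = 0) and satisfies |d/ds(|x(s)|^{p-2} x(s))| ≤ 2^{p-2}(p-1)(|a|^{p-2} + |b|^{p-2})|a - b|. -/
/-!
Write `q = p - 2 > 0`. The map `F y = ‖y‖ ^ q • y` is differentiable everywhere: away from `0` by
the chain rule, and at `0` with derivative `0` since `‖F y‖ = ‖y‖ ^ (q + 1) = o(‖y‖)`. Its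
derivative `v ↦ ‖y‖ ^ q • v + q ‖y‖ ^ (q - 2) ⟪y, v⟫ • y` has operator norm at most
`(q + 1) ‖y‖ ^ q`. On the segment, convexity of the norm gives
`‖x(s)‖ ^ q ≤ (max ‖a‖ ‖b‖) ^ q ≤ ‖a‖ ^ q + ‖b‖ ^ q`, so the factor `2 ^ q ≥ 1` is not even needed.
-/

open Asymptotics Real Topology

section NormRpowSmul

variable {E : Type*} [NormedAddCommGroup E] [InnerProductSpace ℝ E]

theorem hasFDerivAt_norm_rpow_smul_self_zero {q : ℝ} (hq : 0 < q) :
    HasFDerivAt (fun x : E ↦ ‖x‖ ^ q • x) (0 : E →L[ℝ] E) 0 := by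
  refine .of_isLittleO ?_
  have hsmall : (fun x : E ↦ ‖x‖ ^ q) =o[𝓝 0] (fun _ ↦ (1 : ℝ)) := by
    rw [isLittleO_one_iff]
    convert (continuous_norm.rpow_const fun _ ↦ .inr hq.le).tendsto (0 : E)
    simp [hq.ne']
  simpa using hsmall.smul_isBigO (isBigO_refl (fun x : E ↦ x) _)

theorem hasFDerivAt_norm_rpow_of_ne_zero {x : E} (hx : x ≠ 0) (q : ℝ) :
    HasFDerivAt (fun y : E ↦ ‖y‖ ^ q) ((q * ‖x‖ ^ (q - 2)) • innerSL ℝ x) x := by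
  apply HasStrictFDerivAt.hasFDerivAt
  convert! (hasStrictFDerivAt_norm_sq x).rpow_const (p := q / 2) (by simp [hx]) using 0
  simp_rw [← Real.rpow_natCast_mul (norm_nonneg _), ← Nat.cast_smul_eq_nsmul ℝ, smul_smul]
  ring_nf

theorem hasFDerivAt_norm_rpow_smul_self (x : E) {q : ℝ} (hq : 0 < q) :
    HasFDerivAt (fun y : E ↦ ‖y‖ ^ q • y)
      (‖x‖ ^ q • ContinuousLinearMap.id ℝ E + ((q * ‖x‖ ^ (q - 2)) • innerSL ℝ x).smulRight x)
      x := by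
  rcases eq_or_ne x 0 with rfl | hx
  · simpa [hq.ne'] using hasFDerivAt_norm_rpow_smul_self_zero (E := E) hq
  · exact (hasFDerivAt_norm_rpow_of_ne_zero hx q).smul (hasFDerivAt_id x)

theorem norm_fderiv_norm_rpow_smul_self_le (x : E) {q : ℝ} (hq : 0 < q) :
    ‖fderiv ℝ (fun y : E ↦ ‖y‖ ^ q • y) x‖ ≤ (q + 1) * ‖x‖ ^ q := by
  rw [(hasFDerivAt_norm_rpow_smul_self x hq).fderiv]
  rcases eq_or_ne x 0 with rfl | hx
  · simp [hq.ne']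
  have hx' : 0 < ‖x‖ := norm_pos_iff.mpr hx
  calc _ ≤ ‖‖x‖ ^ q • ContinuousLinearMap.id ℝ E‖
        + ‖((q * ‖x‖ ^ (q - 2)) • innerSL ℝ x).smulRight x‖ := norm_add_le _ _
    _ ≤ ‖x‖ ^ q * 1 + q * ‖x‖ ^ (q - 2) * ‖x‖ * ‖x‖ := by
      rw [norm_smul, ContinuousLinearMap.norm_smulRight_apply, norm_smul, innerSL_apply_norm]
      gcongr
      · exact (Real.norm_of_nonneg (by positivity)).le
      · exact ContinuousLinearMap.norm_id_le
      · exact (Real.norm_of_nonneg (by positivity)).le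
    _ = (q + 1) * ‖x‖ ^ q := by
      rw [mul_assoc _ ‖x‖, ← sq, mul_assoc, ← rpow_natCast, ← rpow_add hx']
      push_cast; ring_nf

theorem norm_smul_add_one_sub_smul_rpow_le {q : ℝ} (hq : 0 ≤ q) (a b : E) {s : ℝ}
    (hs : s ∈ Set.Icc (0 : ℝ) 1) :
    ‖s • a + (1 - s) • b‖ ^ q ≤ ‖a‖ ^ q + ‖b‖ ^ q := by
  have hmax : ‖s • a + (1 - s) • b‖ ≤ max ‖a‖ ‖b‖ :=
    (convexOn_norm convex_univ).le_on_segment' trivial trivial hs.1 (by linarith [hs.2]) (by ring)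
  calc _ ≤ max ‖a‖ ‖b‖ ^ q := by gcongr
    _ ≤ _ := by
      rcases le_total ‖a‖ ‖b‖ with h | h
      · rw [max_eq_right h]; exact le_add_of_nonneg_left (by positivity)
      · rw [max_eq_left h]; exact le_add_of_nonneg_right (by positivity)

end NormRpowSmul

theorem hasDerivAt_smul_add_one_sub_smul {F : Type*} [NormedAddCommGroup F] [NormedSpace ℝ F]
    (a b : F) (s : ℝ) : HasDerivAt (fun t : ℝ ↦ t • a + (1 - t) • b) (a - b) s := by
  convert AffineMap.hasDerivAt_lineMap (a := b) (b := a) (x := s) using 1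
  ext t
  rw [AffineMap.lineMap_apply_module, add_comm]

/-- For `p > 2` and `x(s) = s a + (1-s) b`, the derivative of
`s ↦ |x(s)|^{p-2} x(s)` exists at every `s ∈ [0,1]` (including where
`x(s) = 0`) and is bounded by `2^{p-2}(p-1)(|a|^{p-2}+|b|^{p-2})|a-b|`. -/
theorem pLaplace_segment_deriv (K : ℕ) (p : ℝ) (hp : 2 < p)
    (a b : EuclideanSpace ℝ (Fin K)) (s : ℝ) (hs : s ∈ Set.Icc (0 : ℝ) 1) :
    ∃ d : EuclideanSpace ℝ (Fin K),
      HasDerivAt (fun s : ℝ =>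
        (‖s • a + (1 - s) • b‖ ^ (p - 2)) • (s • a + (1 - s) • b)) d s ∧
      ‖d‖ ≤ 2 ^ (p - 2) * (p - 1) * (‖a‖ ^ (p - 2) + ‖b‖ ^ (p - 2)) * ‖a - b‖ := by
  have hq : 0 < p - 2 := by linarith
  set F := fun y : EuclideanSpace ℝ (Fin K) ↦ ‖y‖ ^ (p - 2) • y
  set x := s • a + (1 - s) • b
  have hF : HasFDerivAt F (fderiv ℝ F x) x :=
    (hasFDerivAt_norm_rpow_smul_self x hq).differentiableAt.hasFDerivAt
  refine ⟨fderiv ℝ F x (a - b), ?_, ?_⟩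
  · exact hF.comp_hasDerivAt s (hasDerivAt_smul_add_one_sub_smul a b s)
  have hp1 : 0 ≤ p - 1 := by linarith
  calc _ ≤ ‖fderiv ℝ F x‖ * ‖a - b‖ := ContinuousLinearMap.le_opNorm _ _
    _ ≤ (p - 2 + 1) * ‖x‖ ^ (p - 2) * ‖a - b‖ := by
      gcongr; exact norm_fderiv_norm_rpow_smul_self_le x hq
    _ ≤ (p - 1) * (‖a‖ ^ (p - 2) + ‖b‖ ^ (p - 2)) * ‖a - b‖ := by
      rw [show p - 2 + 1 = p - 1 by ring]
      gcongr
      exact norm_smul_add_one_sub_smul_rpow_le hq.le a b hs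
    _ ≤ _ := by
      simp only [mul_assoc]
      exact le_mul_of_one_le_left (by positivity) (one_le_rpow (by norm_num) hq.le)
end

section
/- Friedrichs inequality from an orthonormal basis: let H be a Hilbert space, V a normed space compactly embedded in H, and {w_k} an orthonormal basis of H. Then for every ε > 0 there exists K_ε ∈ ℕ such that ‖v‖_H² ≤ Σ_{k=1}^{K_ε} |⟨v, w_k⟩_H|² + ε ‖v‖_V² for all v ∈ V. -/
/-!
The partial Parseval sums `∑_{k<K} ⟪y, b k⟫²` increase to `‖y‖²`, so by Dini's theorem they
converge uniformly on the compact set into which `ι` maps a small ball. This gives the inequality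
on a sphere of `V`, and both sides are homogeneous of degree two.
-/

open Filter Topology

namespace HilbertBasis

variable {H : Type*} [NormedAddCommGroup H] [InnerProductSpace ℝ H] (b : HilbertBasis ℕ ℝ H)

theorem tendsto_sum_range_inner_sq (y : H) :
    Tendsto (fun K => ∑ k ∈ Finset.range K, inner ℝ y (b k) ^ 2) atTop (𝓝 (‖y‖ ^ 2)) := by
  have h := (b.hasSum_inner_mul_inner y y).tendsto_sum_nat
  simp only [real_inner_self_eq_norm_sq] at h
  refine h.congr fun K => Finset.sum_congr rfl fun k _ => ?_
  rw [sq, real_inner_comm y (b k)]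

theorem tendstoUniformlyOn_sum_range_inner_sq {M : Set H} (hM : IsCompact M) :
    TendstoUniformlyOn (fun K y => ∑ k ∈ Finset.range K, inner ℝ y (b k) ^ 2)
      (fun y => ‖y‖ ^ 2) atTop M :=
  Monotone.tendstoUniformlyOn_of_forall_tendsto hM (fun K => by fun_prop)
    (fun y _ => monotone_nat_of_le_succ fun K => by
      simpa [Finset.sum_range_succ] using sq_nonneg (inner ℝ y (b K)))
    (by fun_prop) (fun y _ => b.tendsto_sum_range_inner_sq y)

end HilbertBasis

theorem le_mul_norm_sq_of_forall_norm_eq {V : Type*} [NormedAddCommGroup V] [NormedSpace ℝ V]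
    {q : V → ℝ} (hq : ∀ (c : ℝ) (v : V), q (c • v) = c ^ 2 * q v) {r C : ℝ} (hr : 0 < r)
    (h : ∀ v, ‖v‖ = r → q v ≤ C * r ^ 2) (v : V) : q v ≤ C * ‖v‖ ^ 2 := by
  rcases eq_or_ne v 0 with rfl | hv
  · simpa using (hq 0 0).le
  set c := r / ‖v‖
  have hc : 0 < c := div_pos hr (norm_pos_iff.mpr hv)
  have hcv : ‖c • v‖ = r := by
    rw [norm_smul, Real.norm_of_nonneg hc.le, div_mul_cancel₀ r (norm_ne_zero_iff.mpr hv)]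
  have key : c ^ 2 * q v ≤ c ^ 2 * (C * ‖v‖ ^ 2) := by
    calc c ^ 2 * q v = q (c • v) := (hq c v).symm
      _ ≤ C * ‖c • v‖ ^ 2 := hcv ▸ h _ hcv
      _ = c ^ 2 * (C * ‖v‖ ^ 2) := by rw [norm_smul, Real.norm_of_nonneg hc.le]; ring
  exact le_of_mul_le_mul_left key (by positivity)

theorem abstract_friedrichs_general {H V : Type*}
    [NormedAddCommGroup H] [InnerProductSpace ℝ H]
    [NormedAddCommGroup V] [NormedSpace ℝ V]
    (ι : V →L[ℝ] H)
    (hcompact : IsCompactOperator ι)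
    (b : HilbertBasis ℕ ℝ H) :
    ∀ ε : ℝ, 0 < ε → ∃ K : ℕ, ∀ v : V,
      ‖ι v‖ ^ 2 ≤
        (∑ k ∈ Finset.range K, (inner ℝ (ι v) (b k) : ℝ) ^ 2) + ε * ‖v‖ ^ 2 := by
  intro ε hε
  obtain ⟨M, hMc, hM⟩ := hcompact
  obtain ⟨δ, hδ, hball⟩ := Metric.mem_nhds_iff.mp hM
  obtain ⟨K, hK⟩ := (Metric.tendstoUniformlyOn_iff.mp
    (b.tendstoUniformlyOn_sum_range_inner_sq hMc) (ε * (δ / 2) ^ 2) (by positivity)).exists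
  refine ⟨K, fun v => sub_le_iff_le_add'.mp ?_⟩
  refine le_mul_norm_sq_of_forall_norm_eq
    (q := fun v => ‖ι v‖ ^ 2 - ∑ k ∈ Finset.range K, inner ℝ (ι v) (b k) ^ 2)
    (fun c v => ?_) (half_pos hδ) (fun u hu => ?_) v
  · simp only [map_smul, norm_smul, real_inner_smul_left, mul_pow, Real.norm_eq_abs, sq_abs,
      ← Finset.mul_sum]
    ring
  · have hu : ι u ∈ M := hball (by simp [hu, hδ])
    exact (le_abs_self _).trans (Real.dist_eq _ _ ▸ hK (ι u) hu).le

/-- Abstract Friedrichs inequality: if `V` is compactly embedded into a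
Hilbert space `H` via `ι` and `{b_k}` is an orthonormal (Hilbert) basis of
`H`, then for every `ε > 0` there is `K_ε ∈ ℕ` with
`‖v‖_H² ≤ Σ_{k<K_ε} ⟨v, b_k⟩² + ε‖v‖_V²` for all `v ∈ V`. -/
theorem abstract_friedrichs {H V : Type*}
    [NormedAddCommGroup H] [InnerProductSpace ℝ H]
    [NormedAddCommGroup V] [NormedSpace ℝ V]
    (ι : V →L[ℝ] H) (hinj : Function.Injective ι)
    (hcompact : IsCompactOperator ι)
    (b : HilbertBasis ℕ ℝ H) :
    ∀ ε : ℝ, 0 < ε → ∃ K : ℕ, ∀ v : V,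
      ‖ι v‖ ^ 2 ≤
        (∑ k ∈ Finset.range K, (inner ℝ (ι v) (b k) : ℝ) ^ 2) + ε * ‖v‖ ^ 2 :=
  abstract_friedrichs_general ι hcompact b
end

section
/- Uniform-in-time Friedrichs inequality on a moving domain: under the moving-domain assumption, with {w_k^0} an orthonormal basis of L²(Ω₀) consisting of smooth functions and w_k^t := w_k^0 ∘ Φ_t^{-1}, there is c > 0 (depending only on the uniform bounds for J_t, ∇J_t, and ∇Φ_t) such that for each ε > 0 there exists K_ε ∈ ℕ, independent of t, with ‖ψ‖²_{L²(Ω_t)} ≤ c( Σ_{k=1}^{K_ε} |(ψ, w_k^t)_{L²(Ω_t)}|² + ε ‖ψ‖²_{H¹(Ω_t)} ) for all t ∈ [0,T] and all ψ ∈ H¹(Ω_t). -/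
open MeasureTheory Set

set_option maxHeartbeats 4000000

open Topology Filter

theorem bessel_aux {α : Type*} [MeasurableSpace α] (μ : Measure α)
    (w : ℕ → α → ℝ) (f : α → ℝ) (K : ℕ)
    (horth : ∀ k l, (∫ x, w k x * w l x ∂μ) = if k = l then 1 else 0)
    (hf2 : Integrable (fun x => f x ^ 2) μ)
    (hfw : ∀ k, Integrable (fun x => f x * w k x) μ)
    (hww : ∀ k l, Integrable (fun x => w k x * w l x) μ) :
    ∑ k ∈ Finset.range K, (∫ x, f x * w k x ∂μ) ^ 2 ≤ ∫ x, f x ^ 2 ∂μ := by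
  set a : ℕ → ℝ := fun k => ∫ x, f x * w k x ∂μ with ha
  -- integrability of g := ∑ a k • w k pieces
  have hfg : Integrable (fun x => f x * (∑ k ∈ Finset.range K, a k * w k x)) μ := by
    have : (fun x => f x * (∑ k ∈ Finset.range K, a k * w k x))
        = fun x => ∑ k ∈ Finset.range K, a k * (f x * w k x) := by
      funext x; rw [Finset.mul_sum]; congr 1; funext k; ring
    rw [this]
    exact integrable_finset_sum _ (fun k _ => (hfw k).const_mul _)
  have hgg : Integrable (fun x => (∑ k ∈ Finset.range K, a k * w k x) ^ 2) μ := by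
    have : (fun x => (∑ k ∈ Finset.range K, a k * w k x) ^ 2)
        = fun x => ∑ k ∈ Finset.range K, ∑ l ∈ Finset.range K,
            (a k * a l) * (w k x * w l x) := by
      funext x; rw [sq, Finset.sum_mul_sum]
      refine Finset.sum_congr rfl fun k _ => Finset.sum_congr rfl fun l _ => by ring
    rw [this]
    exact integrable_finset_sum _ (fun k _ => integrable_finset_sum _
      (fun l _ => (hww k l).const_mul _))
  have hIfg : (∫ x, f x * (∑ k ∈ Finset.range K, a k * w k x) ∂μ)
      = ∑ k ∈ Finset.range K, a k ^ 2 := by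
    have : (fun x => f x * (∑ k ∈ Finset.range K, a k * w k x))
        = fun x => ∑ k ∈ Finset.range K, a k * (f x * w k x) := by
      funext x; rw [Finset.mul_sum]; congr 1; funext k; ring
    rw [this, integral_finset_sum _ (fun k _ => (hfw k).const_mul _)]
    refine Finset.sum_congr rfl fun k _ => ?_
    rw [integral_const_mul]
    show a k * a k = a k ^ 2
    ring
  have hIgg : (∫ x, (∑ k ∈ Finset.range K, a k * w k x) ^ 2 ∂μ)
      = ∑ k ∈ Finset.range K, a k ^ 2 := by
    have : (fun x => (∑ k ∈ Finset.range K, a k * w k x) ^ 2)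
        = fun x => ∑ k ∈ Finset.range K, ∑ l ∈ Finset.range K,
            (a k * a l) * (w k x * w l x) := by
      funext x; rw [sq, Finset.sum_mul_sum]
      refine Finset.sum_congr rfl fun k _ => Finset.sum_congr rfl fun l _ => by ring
    rw [this, integral_finset_sum _ (fun k _ => integrable_finset_sum _
      (fun l _ => (hww k l).const_mul _))]
    have : ∀ k ∈ Finset.range K, (∫ x, ∑ l ∈ Finset.range K,
        (a k * a l) * (w k x * w l x) ∂μ) = a k ^ 2 := by
      intro k hk
      rw [integral_finset_sum _ (fun l _ => (hww k l).const_mul _)]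
      have : ∀ l ∈ Finset.range K, (∫ x, (a k * a l) * (w k x * w l x) ∂μ)
          = if k = l then a k * a l else 0 := by
        intro l _
        rw [integral_const_mul, horth k l]
        split <;> simp
      rw [Finset.sum_congr rfl this, Finset.sum_ite_eq (Finset.range K) k (fun l => a k * a l)]
      rw [if_pos hk]; ring
    rw [Finset.sum_congr rfl this]
  have key : 0 ≤ ∫ x, (f x - ∑ k ∈ Finset.range K, a k * w k x) ^ 2 ∂μ :=
    integral_nonneg fun x => sq_nonneg _
  have expand : (∫ x, (f x - ∑ k ∈ Finset.range K, a k * w k x) ^ 2 ∂μ)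
      = (∫ x, f x ^ 2 ∂μ) - 2 * (∑ k ∈ Finset.range K, a k ^ 2)
        + (∑ k ∈ Finset.range K, a k ^ 2) := by
    have : (fun x => (f x - ∑ k ∈ Finset.range K, a k * w k x) ^ 2)
        = fun x => (f x ^ 2 - 2 * (f x * (∑ k ∈ Finset.range K, a k * w k x)))
            + (∑ k ∈ Finset.range K, a k * w k x) ^ 2 := by
      funext x; ring
    have h2 : Integrable (fun x => 2 * (f x * ∑ k ∈ Finset.range K, a k * w k x)) μ :=
      hfg.const_mul 2
    have h1 : Integrable (fun x =>
        f x ^ 2 - 2 * (f x * ∑ k ∈ Finset.range K, a k * w k x)) μ := hf2.sub h2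
    rw [this, integral_add h1 hgg, integral_sub hf2 h2, integral_const_mul, hIfg, hIgg]
  nlinarith [key, expand]

theorem smooth_approx_on_compact {E : Type*} [NormedAddCommGroup E] [NormedSpace ℝ E]
    (Q : Set (ℝ × E)) (hQ : IsCompact Q) (f : ℝ × E → ℝ) (hf : ContinuousOn f Q)
    {η : ℝ} (hη : 0 < η) :
    ∃ P : ℝ × E → ℝ, ContDiff ℝ (⊤ : ℕ∞) P ∧ ∀ q ∈ Q, |P q - f q| ≤ η := by
  haveI : CompactSpace Q := isCompact_iff_compactSpace.1 hQ
  let A : Subalgebra ℝ C(Q, ℝ) :=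
    { carrier := {g | ∃ p : ℝ × E → ℝ, ContDiff ℝ (⊤ : ℕ∞) p ∧ ∀ q : Q, p q = g q}
      mul_mem' := by
        rintro g₁ g₂ ⟨p₁, hp₁, he₁⟩ ⟨p₂, hp₂, he₂⟩
        exact ⟨p₁ * p₂, hp₁.mul hp₂, fun q => by
          simp [he₁ q, he₂ q]⟩
      one_mem' := ⟨fun _ => 1, contDiff_const, fun q => rfl⟩
      add_mem' := by
        rintro g₁ g₂ ⟨p₁, hp₁, he₁⟩ ⟨p₂, hp₂, he₂⟩
        exact ⟨p₁ + p₂, hp₁.add hp₂, fun q => by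
          simp [he₁ q, he₂ q]⟩
      zero_mem' := ⟨fun _ => 0, contDiff_const, fun q => rfl⟩
      algebraMap_mem' := fun r => ⟨fun _ => r, contDiff_const, fun q => rfl⟩ }
  have hsep : A.SeparatesPoints := by
    rintro ⟨q₁, hq₁⟩ ⟨q₂, hq₂⟩ hne
    have hne' : q₁ ≠ q₂ := fun h => hne (Subtype.ext h)
    rcases SeparatingDual.exists_separating_of_ne (R := ℝ) hne' with ⟨φ, hφ⟩
    refine ⟨fun q : Q => φ q, ⟨⟨fun q : Q => φ q, φ.continuous.comp continuous_subtype_val⟩,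
      ⟨⟨φ, φ.contDiff, fun q => rfl⟩, rfl⟩⟩, hφ⟩
  obtain ⟨⟨g, hg⟩, hgf⟩ := ContinuousMap.exists_mem_subalgebra_near_continuous_of_separatesPoints
    A hsep (fun q : Q => f q) (hf.restrict) η hη
  obtain ⟨p, hp, hpe⟩ := hg
  refine ⟨p, hp, fun q hq => ?_⟩
  have := hgf ⟨q, hq⟩
  rw [← hpe ⟨q, hq⟩] at this
  simpa using this.le

/-- A moving domain `Ω_t = Φ_t(Ω₀)`, `t ∈ [0,T]`: a bounded domain `Ω₀`
together with a family of diffeomorphisms `Φ_t` of its closure, depending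
continuously differentiably on time, with `Φ₀ = id`.  The field `DΦ` records
the spatial derivative of `Φ_t`. -/
structure MovingDomain (n : ℕ) where
  T : ℝ
  T_pos : 0 < T
  Ω₀ : Set (EuclideanSpace ℝ (Fin n))
  isOpen₀ : IsOpen Ω₀
  bounded₀ : Bornology.IsBounded Ω₀
  nonempty₀ : Ω₀.Nonempty
  connected₀ : IsConnected Ω₀
  Φ : ℝ → EuclideanSpace ℝ (Fin n) → EuclideanSpace ℝ (Fin n)
  Φ_zero : ∀ X ∈ closure Ω₀, Φ 0 X = X
  Φ_cont : ContinuousOn (fun q : ℝ × EuclideanSpace ℝ (Fin n) => Φ q.1 q.2)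
    (Icc 0 T ×ˢ closure Ω₀)
  DΦ : ℝ → EuclideanSpace ℝ (Fin n) →
    (EuclideanSpace ℝ (Fin n) →L[ℝ] EuclideanSpace ℝ (Fin n))
  hDΦ : ∀ t ∈ Icc (0 : ℝ) T, ∀ X ∈ closure Ω₀,
    HasFDerivWithinAt (Φ t) (DΦ t X) (closure Ω₀) X
  DΦ_cont : ContinuousOn (fun q : ℝ × EuclideanSpace ℝ (Fin n) => DΦ q.1 q.2)
    (Icc 0 T ×ˢ closure Ω₀)
  DΦ_zero : ∀ X ∈ closure Ω₀, DΦ 0 X = ContinuousLinearMap.id ℝ _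
  injOn : ∀ t ∈ Icc (0 : ℝ) T, InjOn (Φ t) (closure Ω₀)
  det_ne : ∀ t ∈ Icc (0 : ℝ) T, ∀ X ∈ closure Ω₀, (DΦ t X).det ≠ 0

/-- The moving domain at time `t`: `Ω_t = Φ_t(Ω₀)`. -/
def MovingDomain.Ω {n : ℕ} (D : MovingDomain n) (t : ℝ) :
    Set (EuclideanSpace ℝ (Fin n)) :=
  D.Φ t '' D.Ω₀

theorem MovingDomain.DΦ_contOn {n : ℕ} (D : MovingDomain n) {t : ℝ}
    (ht : t ∈ Icc (0 : ℝ) D.T) :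
    ContinuousOn (fun y => D.DΦ t y) (closure D.Ω₀) := by
  have h : ContinuousOn ((fun q : ℝ × EuclideanSpace ℝ (Fin n) => D.DΦ q.1 q.2) ∘
      (fun y => (t, y))) (closure D.Ω₀) :=
    D.DΦ_cont.comp (continuous_const.prodMk continuous_id).continuousOn
      (fun y hy => mk_mem_prod ht hy)
  exact h

theorem MovingDomain.isOpen_Ω {n : ℕ} (D : MovingDomain n) {t : ℝ}
    (ht : t ∈ Icc (0 : ℝ) D.T) : IsOpen (D.Ω t) := by
  rw [isOpen_iff_mem_nhds]
  rintro y ⟨X, hX, rfl⟩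
  have hXc : X ∈ closure D.Ω₀ := subset_closure hX
  have hev : ∀ᶠ y in 𝓝 X, HasFDerivAt (D.Φ t) (D.DΦ t y) y := by
    filter_upwards [D.isOpen₀.mem_nhds hX] with y hy
    exact (D.hDΦ t ht y (subset_closure hy)).hasFDerivAt
      (Filter.mem_of_superset (D.isOpen₀.mem_nhds hy) subset_closure)
  have hcont : ContinuousAt (fun y => D.DΦ t y) X :=
    ((D.DΦ_contOn ht).mono subset_closure).continuousAt (D.isOpen₀.mem_nhds hX)
  have hstrict : HasStrictFDerivAt (D.Φ t) (D.DΦ t X) X :=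
    hasStrictFDerivAt_of_hasFDerivAt_of_continuousAt hev hcont
  have hdet := D.det_ne t ht X hXc
  have hstrict' : HasStrictFDerivAt (D.Φ t)
      (((D.DΦ t X).toContinuousLinearEquivOfDetNeZero hdet :
        EuclideanSpace ℝ (Fin n) ≃L[ℝ] EuclideanSpace ℝ (Fin n)) :
        EuclideanSpace ℝ (Fin n) →L[ℝ] EuclideanSpace ℝ (Fin n)) X := by
    rwa [ContinuousLinearMap.coe_toContinuousLinearEquivOfDetNeZero]
  have hmap := hstrict'.map_nhds_eq_of_equiv
  rw [← hmap]
  exact Filter.image_mem_map (D.isOpen₀.mem_nhds hX)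

/-- Uniform-in-time Friedrichs inequality on a moving domain: given a smooth
orthonormal basis `{w_k}` of `L²(Ω₀)` satisfying the Friedrichs inequality at
`t = 0`, and the transported functions `w_k^t = w_k ∘ Φ_t⁻¹`, there is `c > 0`
such that for each `ε > 0` there is `K_ε ∈ ℕ`, independent of `t`, with
`‖ψ‖²_{L²(Ω_t)} ≤ c( Σ_{k<K_ε} (ψ, w_k^t)²_{L²(Ω_t)} + ε ‖ψ‖²_{H¹(Ω_t)} )`
for all `t ∈ [0,T]` and all `ψ ∈ H¹(Ω_t)`. -/
theorem uniform_friedrichs_moving_domain {n : ℕ} (D : MovingDomain n)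
    (Ψ : ℝ → EuclideanSpace ℝ (Fin n) → EuclideanSpace ℝ (Fin n))
    (hΨ : ∀ t ∈ Icc (0 : ℝ) D.T, ∀ X ∈ closure D.Ω₀, Ψ t (D.Φ t X) = X)
    (w : ℕ → EuclideanSpace ℝ (Fin n) → ℝ)
    (hw_smooth : ∀ k, ContDiffOn ℝ (⊤ : ℕ∞) (w k) (closure D.Ω₀))
    (horth : ∀ k l, (∫ X in D.Ω₀, w k X * w l X) = if k = l then 1 else 0)
    -- the classical Friedrichs inequality on `Ω₀` for the basis `{w_k}`
    (hFried₀ : ∀ ε : ℝ, 0 < ε → ∃ K : ℕ,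
      ∀ Z : EuclideanSpace ℝ (Fin n) → ℝ, DifferentiableOn ℝ Z D.Ω₀ →
        IntegrableOn (fun X => Z X ^ 2) D.Ω₀ →
        IntegrableOn (fun X => ‖fderivWithin ℝ Z D.Ω₀ X‖ ^ 2) D.Ω₀ →
        (∫ X in D.Ω₀, Z X ^ 2) ≤
          (∑ k ∈ Finset.range K, (∫ X in D.Ω₀, Z X * w k X) ^ 2) +
            ε * ((∫ X in D.Ω₀, Z X ^ 2) +
              ∫ X in D.Ω₀, ‖fderivWithin ℝ Z D.Ω₀ X‖ ^ 2)) :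
    ∃ c : ℝ, 0 < c ∧ ∀ ε : ℝ, 0 < ε → ∃ K : ℕ,
      ∀ t ∈ Icc (0 : ℝ) D.T,
        ∀ ψ : EuclideanSpace ℝ (Fin n) → ℝ, DifferentiableOn ℝ ψ (D.Ω t) →
          IntegrableOn (fun x => ψ x ^ 2) (D.Ω t) →
          IntegrableOn (fun x => ‖fderivWithin ℝ ψ (D.Ω t) x‖ ^ 2) (D.Ω t) →
          (∫ x in D.Ω t, ψ x ^ 2) ≤
            c * ((∑ k ∈ Finset.range K,
                (∫ x in D.Ω t, ψ x * w k (Ψ t x)) ^ 2) +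
              ε * ((∫ x in D.Ω t, ψ x ^ 2) +
                ∫ x in D.Ω t, ‖fderivWithin ℝ ψ (D.Ω t) x‖ ^ 2)) := by
  classical
  -- the compact space-time cylinder
  set Q : Set (ℝ × EuclideanSpace ℝ (Fin n)) := Icc (0 : ℝ) D.T ×ˢ closure D.Ω₀ with hQdef
  have hclos_comp : IsCompact (closure D.Ω₀) :=
    Metric.isCompact_of_isClosed_isBounded isClosed_closure D.bounded₀.closure
  have hQcomp : IsCompact Q := isCompact_Icc.prod hclos_comp
  obtain ⟨X₀, hX₀⟩ := D.nonempty₀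
  have hQne : Q.Nonempty :=
    ⟨(0, X₀), mk_mem_prod (left_mem_Icc.2 D.T_pos.le) (subset_closure hX₀)⟩
  -- the Jacobian as a function on the cylinder
  set Jf : ℝ × EuclideanSpace ℝ (Fin n) → ℝ := fun q => |(D.DΦ q.1 q.2).det| with hJfdef
  have hJfcont : ContinuousOn Jf Q :=
    (continuous_abs.comp ContinuousLinearMap.continuous_det).comp_continuousOn D.DΦ_cont
  -- upper and lower bounds for the Jacobian
  obtain ⟨qm, hqmQ, hqm⟩ := hQcomp.exists_isMinOn hQne hJfcont
  obtain ⟨qM, hqMQ, hqM⟩ := hQcomp.exists_isMaxOn hQne hJfcont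
  set c₀ : ℝ := Jf qm with hc₀def
  set c₁ : ℝ := Jf qM with hc₁def
  have hc₀pos : 0 < c₀ := abs_pos.2 (D.det_ne qm.1 hqmQ.1 qm.2 hqmQ.2)
  have hJlo : ∀ q ∈ Q, c₀ ≤ Jf q := fun q hq => hqm hq
  have hJhi : ∀ q ∈ Q, Jf q ≤ c₁ := fun q hq => hqM hq
  have hc₀₁ : c₀ ≤ c₁ := hqM hqmQ
  have hc₁pos : 0 < c₁ := lt_of_lt_of_le hc₀pos hc₀₁
  -- uniform bound on the space derivative of Φ
  obtain ⟨qΦ, hqΦQ, hqΦ⟩ := hQcomp.exists_isMaxOn hQne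
    (D.DΦ_cont.norm : ContinuousOn (fun q : ℝ × EuclideanSpace ℝ (Fin n) =>
      ‖D.DΦ q.1 q.2‖) Q)
  set MΦ : ℝ := ‖D.DΦ qΦ.1 qΦ.2‖ with hMΦdef
  have hMΦ0 : 0 ≤ MΦ := norm_nonneg _
  have hMΦ : ∀ q ∈ Q, ‖D.DΦ q.1 q.2‖ ≤ MΦ := fun q hq => hqΦ hq
  -- choice of the approximation accuracy η
  set η : ℝ := min (c₀ / 2) (Real.sqrt (c₀ ^ 3 / (32 * c₁))) with hηdef
  have hηpos : 0 < η := lt_min (by linarith)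
    (Real.sqrt_pos.2 (div_pos (by positivity) (by linarith)))
  have hη1 : η ≤ c₀ / 2 := min_le_left _ _
  have hη2 : 32 * c₁ * η ^ 2 ≤ c₀ ^ 3 := by
    have h0 : (0:ℝ) ≤ c₀ ^ 3 / (32 * c₁) := le_of_lt (div_pos (by positivity) (by linarith))
    have h1 : η ^ 2 ≤ c₀ ^ 3 / (32 * c₁) := by
      have := pow_le_pow_left₀ hηpos.le (min_le_right (c₀ / 2)
        (Real.sqrt (c₀ ^ 3 / (32 * c₁)))) 2
      rwa [Real.sq_sqrt h0] at this
    rw [le_div_iff₀ (by linarith : (0:ℝ) < 32 * c₁)] at h1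
    linarith
  -- smooth approximation of the Jacobian on the cylinder
  obtain ⟨P, hPsmooth, hPJ⟩ := smooth_approx_on_compact Q hQcomp Jf hJfcont hηpos
  -- smoothness in the space variable, and the space derivative of P
  have hPt : ∀ s : ℝ, ContDiff ℝ (⊤ : ℕ∞) (fun Y : EuclideanSpace ℝ (Fin n) => P (s, Y)) :=
    fun s => hPsmooth.comp ((contDiff_const (c := s)).prodMk contDiff_id)
  set Pd : ℝ × EuclideanSpace ℝ (Fin n) → (EuclideanSpace ℝ (Fin n) →L[ℝ] ℝ) :=
    fun q => fderiv ℝ (fun Y : EuclideanSpace ℝ (Fin n) => P (q.1, Y)) q.2 with hPddef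
  have hPd_eq : ∀ q : ℝ × EuclideanSpace ℝ (Fin n), Pd q =
      (fderiv ℝ P q).comp (ContinuousLinearMap.inr ℝ ℝ (EuclideanSpace ℝ (Fin n))) := by
    rintro ⟨s, X⟩
    have h1 : HasFDerivAt (fun Y : EuclideanSpace ℝ (Fin n) => (s, Y))
        (ContinuousLinearMap.inr ℝ ℝ (EuclideanSpace ℝ (Fin n))) X :=
      hasFDerivAt_prodMk_right s X
    have h2 : HasFDerivAt P (fderiv ℝ P (s, X)) (s, X) :=
      ((hPsmooth.differentiable (by simp)) (s, X)).hasFDerivAt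
    exact (h2.comp X h1).fderiv
  have hPdcont : Continuous Pd := by
    have h : Continuous fun q : ℝ × EuclideanSpace ℝ (Fin n) =>
        (fderiv ℝ P q).comp (ContinuousLinearMap.inr ℝ ℝ (EuclideanSpace ℝ (Fin n))) :=
      isBoundedBilinearMap_comp.continuous.comp
        ((hPsmooth.continuous_fderiv (by simp)).prodMk continuous_const)
    exact (funext hPd_eq : Pd = _) ▸ h
  obtain ⟨qP, hqPQ, hqP⟩ := hQcomp.exists_isMaxOn hQne (hPdcont.norm.continuousOn)
  set MP : ℝ := ‖Pd qP‖ with hMPdef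
  have hMP0 : 0 ≤ MP := norm_nonneg _
  have hMP : ∀ q ∈ Q, ‖Pd q‖ ≤ MP := fun q hq => hqP hq
  -- the constant c
  have hcpos : (0:ℝ) < 16 * c₁ / c₀ ^ 2 + 1 := by
    have h := div_nonneg (by linarith : (0:ℝ) ≤ 16 * c₁) (sq_nonneg c₀)
    linarith
  refine ⟨16 * c₁ / c₀ ^ 2 + 1, hcpos, ?_⟩
  intro ε hε
  -- choice of ε' and K
  set R : ℝ := 4 * c₁ * (4 * c₁ ^ 2 + 2 * MP ^ 2) + 32 * c₁ ^ 3 * MΦ ^ 2 with hRdef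
  have hRpos : 0 < R := by
    nlinarith [mul_pos hc₁pos (mul_pos hc₁pos hc₁pos), mul_nonneg hc₁pos.le (sq_nonneg MP),
      mul_nonneg (mul_nonneg hc₁pos.le (mul_nonneg hc₁pos.le hc₁pos.le)) (sq_nonneg MΦ)]
  have hminpos : 0 < min 1 ε := lt_min one_pos hε
  have hmin1 : min 1 ε ≤ 1 := min_le_left _ _
  have hminε : min 1 ε ≤ ε := min_le_right _ _
  set ε' : ℝ := c₀ ^ 3 / 4 * min 1 ε / R with hε'def
  have hε'pos : 0 < ε' :=
    div_pos (mul_pos (by positivity) hminpos) hRpos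
  obtain ⟨K, hK⟩ := hFried₀ ε' hε'pos
  refine ⟨K, ?_⟩
  intro t ht ψ hdiff hint1 hint2
  -- basic facts about the fixed time slice
  have hsm : MeasurableSet D.Ω₀ := D.isOpen₀.measurableSet
  have hst_open : IsOpen (D.Ω t) := D.isOpen_Ω ht
  have hf' : ∀ X ∈ D.Ω₀, HasFDerivWithinAt (D.Φ t) (D.DΦ t X) D.Ω₀ X :=
    fun X hX => (D.hDΦ t ht X (subset_closure hX)).mono subset_closure
  have hinj : InjOn (D.Φ t) D.Ω₀ := (D.injOn t ht).mono subset_closure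
  have hmemQ : ∀ X ∈ closure D.Ω₀, (t, X) ∈ Q := fun X hX => mk_mem_prod ht hX
  set J : EuclideanSpace ℝ (Fin n) → ℝ := fun X => |(D.DΦ t X).det| with hJdef
  set p : EuclideanSpace ℝ (Fin n) → ℝ := fun Y => P (t, Y) with hpdef
  set Z : EuclideanSpace ℝ (Fin n) → ℝ := fun X => ψ (D.Φ t X) with hZdef
  set Zt : EuclideanSpace ℝ (Fin n) → ℝ := fun X => Z X * p X with hZtdef
  set G : EuclideanSpace ℝ (Fin n) → ℝ :=
    fun X => ‖fderivWithin ℝ ψ (D.Ω t) (D.Φ t X)‖ ^ 2 with hGdef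
  -- pointwise bounds on the closure
  have hJc₀ : ∀ X ∈ closure D.Ω₀, c₀ ≤ J X := fun X hX => hJlo (t, X) (hmemQ X hX)
  have hJc₁ : ∀ X ∈ closure D.Ω₀, J X ≤ c₁ := fun X hX => hJhi (t, X) (hmemQ X hX)
  have hpJ : ∀ X ∈ closure D.Ω₀, |p X - J X| ≤ η := fun X hX => hPJ (t, X) (hmemQ X hX)
  have hplo : ∀ X ∈ closure D.Ω₀, c₀ / 2 ≤ p X := by
    intro X hX
    have h1 := abs_le.1 (hpJ X hX)
    have h2 := hJc₀ X hX
    linarith [hη1]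
  have hphi : ∀ X ∈ closure D.Ω₀, |p X| ≤ 2 * c₁ := by
    intro X hX
    have h1 := abs_le.1 (hpJ X hX)
    have h2 := hJc₁ X hX
    have h3 := hplo X hX
    rw [abs_le]
    constructor <;> nlinarith [hη1, hc₀₁, hc₀pos]
  have hDΦb : ∀ X ∈ closure D.Ω₀, ‖D.DΦ t X‖ ≤ MΦ := fun X hX => hMΦ (t, X) (hmemQ X hX)
  have hPdb : ∀ X ∈ closure D.Ω₀, ‖fderiv ℝ p X‖ ≤ MP := fun X hX => hMP (t, X) (hmemQ X hX)
  -- continuity facts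
  have hφcont : ContinuousOn (D.Φ t) D.Ω₀ :=
    fun X hX => (hf' X hX).differentiableWithinAt.continuousWithinAt
  have hφmaps : MapsTo (D.Φ t) D.Ω₀ (D.Ω t) := fun X hX => mem_image_of_mem _ hX
  have hψcont : ContinuousOn ψ (D.Ω t) := hdiff.continuousOn
  have hZcont : ContinuousOn Z D.Ω₀ := hψcont.comp hφcont hφmaps
  have hpcont : Continuous p := (hPt t).continuous
  have hJcont : ContinuousOn J D.Ω₀ :=
    (continuous_abs.comp ContinuousLinearMap.continuous_det).comp_continuousOn
      ((D.DΦ_contOn ht).mono subset_closure)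
  -- change of variables
  have hΩ : D.Ω t = D.Φ t '' D.Ω₀ := rfl
  have hCoV : ∀ g : EuclideanSpace ℝ (Fin n) → ℝ,
      (∫ x in D.Ω t, g x) = ∫ X in D.Ω₀, J X * g (D.Φ t X) := by
    intro g
    rw [hΩ]
    have h := integral_image_eq_integral_abs_det_fderiv_smul volume hsm hf' hinj g
    simpa [hJdef, smul_eq_mul] using h
  have hCoVi : ∀ g : EuclideanSpace ℝ (Fin n) → ℝ, IntegrableOn g (D.Ω t) →
      IntegrableOn (fun X => J X * g (D.Φ t X)) D.Ω₀ := by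
    intro g hg
    rw [hΩ] at hg
    have h := (integrableOn_image_iff_integrableOn_abs_det_fderiv_smul
      volume hsm hf' hinj g).1 hg
    simpa [hJdef, smul_eq_mul] using h
  have hiJZ2 : IntegrableOn (fun X => J X * Z X ^ 2) D.Ω₀ :=
    hCoVi (fun x => ψ x ^ 2) hint1
  have hiJG : IntegrableOn (fun X => J X * G X) D.Ω₀ :=
    hCoVi (fun x => ‖fderivWithin ℝ ψ (D.Ω t) x‖ ^ 2) hint2
  -- dividing by the Jacobian
  have hdiv : ∀ u : EuclideanSpace ℝ (Fin n) → ℝ,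
      IntegrableOn (fun X => J X * u X) D.Ω₀ → IntegrableOn u D.Ω₀ := by
    intro u hu
    have hJmeas : AEStronglyMeasurable (fun X => (J X)⁻¹) (volume.restrict D.Ω₀) :=
      ((hJcont.aemeasurable hsm).inv).aestronglyMeasurable
    have hbound : ∀ᵐ X ∂volume.restrict D.Ω₀, ‖(J X)⁻¹‖ ≤ c₀⁻¹ := by
      rw [ae_restrict_iff' hsm]
      refine ae_of_all _ fun X hX => ?_
      have h1 := hJc₀ X (subset_closure hX)
      rw [Real.norm_eq_abs, abs_inv, abs_of_nonneg (le_trans hc₀pos.le h1)]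
      exact inv_anti₀ hc₀pos h1
    have h2 : Integrable (fun X => (J X)⁻¹ * (J X * u X)) (volume.restrict D.Ω₀) :=
      Integrable.bdd_mul hu hJmeas hbound
    refine h2.congr ?_
    rw [Filter.EventuallyEq, ae_restrict_iff' hsm]
    refine ae_of_all _ fun X hX => ?_
    have h1 : J X ≠ 0 := ne_of_gt (lt_of_lt_of_le hc₀pos (hJc₀ X (subset_closure hX)))
    field_simp
  have hiZ2 : IntegrableOn (fun X => Z X ^ 2) D.Ω₀ := hdiv _ hiJZ2
  have hiG : IntegrableOn G D.Ω₀ := hdiv _ hiJG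
  -- L² ⊆ L¹ on the bounded set Ω₀
  haveI hfinm : IsFiniteMeasure (volume.restrict D.Ω₀) := by
    constructor
    rw [Measure.restrict_apply_univ]
    exact D.bounded₀.measure_lt_top
  have hL2L1 : ∀ u : EuclideanSpace ℝ (Fin n) → ℝ,
      IntegrableOn (fun X => u X ^ 2) D.Ω₀ →
      AEStronglyMeasurable u (volume.restrict D.Ω₀) → IntegrableOn u D.Ω₀ := by
    intro u hu2 humeas
    have hb : Integrable (fun X => (1 + u X ^ 2) / 2) (volume.restrict D.Ω₀) :=
      ((integrable_const (1:ℝ)).add hu2).div_const 2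
    refine Integrable.mono' hb humeas (ae_of_all _ fun X => ?_)
    rw [Real.norm_eq_abs]
    nlinarith [sq_nonneg (|u X| - 1), abs_nonneg (u X), sq_abs (u X)]
  have hiZ : IntegrableOn Z D.Ω₀ :=
    hL2L1 Z hiZ2 (hZcont.aemeasurable hsm).aestronglyMeasurable
  -- bounded multiplication helper
  have hmul : ∀ (u g : EuclideanSpace ℝ (Fin n) → ℝ) (Cg : ℝ), IntegrableOn u D.Ω₀ →
      AEStronglyMeasurable g (volume.restrict D.Ω₀) →
      (∀ X ∈ D.Ω₀, |g X| ≤ Cg) → IntegrableOn (fun X => u X * g X) D.Ω₀ := by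
    intro u g Cg hu hg hbd
    have h2 : Integrable (fun X => g X * u X) (volume.restrict D.Ω₀) := by
      refine Integrable.bdd_mul (c := Cg) hu hg ?_
      rw [ae_restrict_iff' hsm]
      exact ae_of_all _ fun X hX => by rw [Real.norm_eq_abs]; exact hbd X hX
    exact h2.congr (ae_of_all _ fun X => mul_comm _ _)
  -- bounds and integrability of the basis functions
  have hwcont : ∀ k, ContinuousOn (w k) (closure D.Ω₀) := fun k => (hw_smooth k).continuousOn
  have hwbdd : ∀ k, ∃ Ck : ℝ, ∀ X ∈ closure D.Ω₀, |w k X| ≤ Ck := by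
    intro k
    obtain ⟨q, hqQ, hq⟩ := hclos_comp.exists_isMaxOn ⟨X₀, subset_closure hX₀⟩
      (hwcont k).norm
    exact ⟨|w k q|, fun X hX => hq hX⟩
  have hwmeas : ∀ k, AEStronglyMeasurable (w k) (volume.restrict D.Ω₀) :=
    fun k => (((hwcont k).mono subset_closure).aemeasurable hsm).aestronglyMeasurable
  have hww : ∀ k l, IntegrableOn (fun X => w k X * w l X) D.Ω₀ := fun k l =>
    (((hwcont k).mul (hwcont l)).integrableOn_compact hclos_comp).mono_set subset_closure
  -- differentiability of Zt on Ω₀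
  have hZdiff : DifferentiableOn ℝ Z D.Ω₀ :=
    hdiff.comp (fun X hX => (hf' X hX).differentiableWithinAt) hφmaps
  have hpdiff : DifferentiableOn ℝ p D.Ω₀ := ((hPt t).differentiable (by simp)).differentiableOn
  have hZtdiff : DifferentiableOn ℝ Zt D.Ω₀ := hZdiff.mul hpdiff
  -- the derivative formula for Zt
  set A : EuclideanSpace ℝ (Fin n) → (EuclideanSpace ℝ (Fin n) →L[ℝ] ℝ) :=
    fun X => (fderivWithin ℝ ψ (D.Ω t) (D.Φ t X)).comp (D.DΦ t X) with hAdef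
  have hDeq : ∀ X ∈ D.Ω₀, fderivWithin ℝ Zt D.Ω₀ X =
      Z X • fderiv ℝ p X + p X • A X := by
    intro X hX
    have hψfd : HasFDerivWithinAt ψ (fderivWithin ℝ ψ (D.Ω t) (D.Φ t X)) (D.Ω t) (D.Φ t X) :=
      (hdiff (D.Φ t X) (hφmaps hX)).hasFDerivWithinAt
    have hZfd : HasFDerivWithinAt Z (A X) D.Ω₀ X :=
      HasFDerivWithinAt.comp X hψfd (hf' X hX) hφmaps
    have hpfd : HasFDerivWithinAt p (fderiv ℝ p X) D.Ω₀ X :=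
      (((hPt t).differentiable (by simp)) X).hasFDerivAt.hasFDerivWithinAt
    have hmulfd : HasFDerivWithinAt Zt (Z X • fderiv ℝ p X + p X • A X) D.Ω₀ X :=
      hZfd.mul hpfd
    exact hmulfd.fderivWithin (D.isOpen₀.uniqueDiffOn X hX)
  -- pointwise bound for the derivative of Zt
  have hgradbound : ∀ X ∈ D.Ω₀, ‖fderivWithin ℝ Zt D.Ω₀ X‖ ^ 2 ≤
      2 * MP ^ 2 * Z X ^ 2 + 8 * c₁ ^ 2 * MΦ ^ 2 * G X := by
    intro X hX
    have hXc := subset_closure hX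
    rw [hDeq X hX]
    have h1 : ‖Z X • fderiv ℝ p X + p X • A X‖ ≤
        |Z X| * MP + (2 * c₁) * (MΦ * ‖fderivWithin ℝ ψ (D.Ω t) (D.Φ t X)‖) := by
      refine (norm_add_le _ _).trans (add_le_add ?_ ?_)
      · rw [norm_smul, Real.norm_eq_abs]
        exact mul_le_mul_of_nonneg_left (hPdb X hXc) (abs_nonneg _)
      · rw [norm_smul, Real.norm_eq_abs]
        have hA : ‖A X‖ ≤ MΦ * ‖fderivWithin ℝ ψ (D.Ω t) (D.Φ t X)‖ := by
          simp only [hAdef]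
          refine ((fderivWithin ℝ ψ (D.Ω t) (D.Φ t X)).opNorm_comp_le (D.DΦ t X)).trans ?_
          exact (mul_le_mul_of_nonneg_left (hDΦb X hXc)
            (norm_nonneg (fderivWithin ℝ ψ (D.Ω t) (D.Φ t X)))).trans_eq
            (mul_comm _ _)
        exact mul_le_mul (hphi X hXc) hA (norm_nonneg _) (by linarith)
    have h2 : (0:ℝ) ≤ ‖Z X • fderiv ℝ p X + p X • A X‖ := norm_nonneg _
    have h3 : (0:ℝ) ≤ |Z X| := abs_nonneg _
    have h4 : (0:ℝ) ≤ ‖fderivWithin ℝ ψ (D.Ω t) (D.Φ t X)‖ := norm_nonneg _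
    have h5 : G X = ‖fderivWithin ℝ ψ (D.Ω t) (D.Φ t X)‖ ^ 2 := rfl
    rw [h5]
    nlinarith [sq_abs (Z X), sq_nonneg (|Z X| * MP -
      (2 * c₁) * (MΦ * ‖fderivWithin ℝ ψ (D.Ω t) (D.Φ t X)‖)), hMP0, hMΦ0,
      mul_nonneg hMΦ0 h4]
  -- a.e. strong measurability of the gradient squared
  have hgradmeas : AEStronglyMeasurable (fun X => ‖fderivWithin ℝ Zt D.Ω₀ X‖ ^ 2)
      (volume.restrict D.Ω₀) := by
    have hφae : AEMeasurable (D.Φ t) (volume.restrict D.Ω₀) := hφcont.aemeasurable hsm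
    have m1 : AEMeasurable (fun X => fderiv ℝ ψ (D.Φ t X)) (volume.restrict D.Ω₀) :=
      (measurable_fderiv ℝ ψ).comp_aemeasurable hφae
    have m2 : AEMeasurable (fun X => D.DΦ t X) (volume.restrict D.Ω₀) :=
      ((D.DΦ_contOn ht).mono subset_closure).aemeasurable hsm
    have m3 : AEMeasurable (fun X => (fderiv ℝ ψ (D.Φ t X)).comp (D.DΦ t X))
        (volume.restrict D.Ω₀) :=
      isBoundedBilinearMap_comp.continuous.measurable.comp_aemeasurable (m1.prodMk m2)
    have m4 : AEMeasurable Z (volume.restrict D.Ω₀) := hZcont.aemeasurable hsm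
    have m5 : AEMeasurable (fun X => Z X • fderiv ℝ p X) (volume.restrict D.Ω₀) :=
      continuous_smul.measurable.comp_aemeasurable
        (m4.prodMk (((hPt t).continuous_fderiv (by simp)).aemeasurable))
    have m6 : AEMeasurable (fun X => p X • (fderiv ℝ ψ (D.Φ t X)).comp (D.DΦ t X))
        (volume.restrict D.Ω₀) :=
      continuous_smul.measurable.comp_aemeasurable (hpcont.aemeasurable.prodMk m3)
    have m7 : AEMeasurable (fun X =>
        ‖Z X • fderiv ℝ p X + p X • (fderiv ℝ ψ (D.Φ t X)).comp (D.DΦ t X)‖ ^ 2)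
        (volume.restrict D.Ω₀) := ((m5.add m6).norm.pow_const 2)
    refine m7.aestronglyMeasurable.congr ?_
    rw [Filter.EventuallyEq, ae_restrict_iff' hsm]
    refine ae_of_all _ fun X hX => ?_
    rw [hDeq X hX]
    have : A X = (fderiv ℝ ψ (D.Φ t X)).comp (D.DΦ t X) := by
      rw [hAdef]
      simp only []
      rw [fderivWithin_of_isOpen hst_open (hφmaps hX)]
    rw [this]
  -- integrability of the gradient squared of Zt
  have hiZtgrad : IntegrableOn (fun X => ‖fderivWithin ℝ Zt D.Ω₀ X‖ ^ 2) D.Ω₀ := by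
    refine Integrable.mono' ((hiZ2.const_mul (2 * MP ^ 2)).add
      (hiG.const_mul (8 * c₁ ^ 2 * MΦ ^ 2))) hgradmeas ?_
    rw [ae_restrict_iff' hsm]
    refine ae_of_all _ fun X hX => ?_
    rw [Real.norm_eq_abs, abs_of_nonneg (by positivity)]
    exact hgradbound X hX
  -- integrability of Zt²
  have hiZt2 : IntegrableOn (fun X => Zt X ^ 2) D.Ω₀ := by
    have h1 : IntegrableOn (fun X => Z X ^ 2 * p X ^ 2) D.Ω₀ := by
      refine hmul (fun X => Z X ^ 2) (fun X => p X ^ 2) ((2 * c₁) ^ 2) hiZ2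
        ((hpcont.pow 2).aestronglyMeasurable) ?_
      intro X hX
      have h := hphi X (subset_closure hX)
      rw [abs_pow]
      exact pow_le_pow_left₀ (abs_nonneg _) h 2
    exact h1.congr (ae_of_all _ fun X => by simp only [hZtdef]; ring)
  -- the Friedrichs inequality applied to Zt
  have key := hK Zt hZtdiff hiZt2 hiZtgrad
  -- abbreviations for the scalar quantities
  set N : ℝ := ∫ x in D.Ω t, ψ x ^ 2 with hNdef
  set gr : ℝ := ∫ x in D.Ω t, ‖fderivWithin ℝ ψ (D.Ω t) x‖ ^ 2 with hgrdef
  set S : ℝ := ∑ k ∈ Finset.range K, (∫ x in D.Ω t, ψ x * w k (Ψ t x)) ^ 2 with hSdef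
  set IZ2 : ℝ := ∫ X in D.Ω₀, Z X ^ 2 with hIZ2def
  set IG : ℝ := ∫ X in D.Ω₀, G X with hIGdef
  set IZt : ℝ := ∫ X in D.Ω₀, Zt X ^ 2 with hIZtdef
  set Igr : ℝ := ∫ X in D.Ω₀, ‖fderivWithin ℝ Zt D.Ω₀ X‖ ^ 2 with hIgrdef
  have hN0 : 0 ≤ N := integral_nonneg fun x => sq_nonneg _
  have hgr0 : 0 ≤ gr := integral_nonneg fun x => sq_nonneg _
  have hIZ20 : 0 ≤ IZ2 := integral_nonneg fun x => sq_nonneg _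
  have hIG0 : 0 ≤ IG := integral_nonneg fun x => sq_nonneg _
  have hIZt0 : 0 ≤ IZt := integral_nonneg fun x => sq_nonneg _
  have hS0 : 0 ≤ S := Finset.sum_nonneg fun k _ => sq_nonneg _
  -- change of variables identities
  have hNeq : N = ∫ X in D.Ω₀, J X * Z X ^ 2 := hCoV (fun x => ψ x ^ 2)
  have hgreq : gr = ∫ X in D.Ω₀, J X * G X :=
    hCoV (fun x => ‖fderivWithin ℝ ψ (D.Ω t) x‖ ^ 2)
  -- comparisons of integrals
  have hA1 : c₀ * IZ2 ≤ N := by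
    rw [hNeq, hIZ2def, ← integral_const_mul]
    refine setIntegral_mono_on (hiZ2.const_mul c₀) hiJZ2 hsm fun X hX => ?_
    exact mul_le_mul_of_nonneg_right (hJc₀ X (subset_closure hX)) (sq_nonneg _)
  have hA2 : N ≤ c₁ * IZ2 := by
    rw [hNeq, hIZ2def, ← integral_const_mul]
    refine setIntegral_mono_on hiJZ2 (hiZ2.const_mul c₁) hsm fun X hX => ?_
    exact mul_le_mul_of_nonneg_right (hJc₁ X (subset_closure hX)) (sq_nonneg _)
  have hA3 : c₀ * IG ≤ gr := by
    rw [hgreq, hIGdef, ← integral_const_mul]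
    refine setIntegral_mono_on (hiG.const_mul c₀) hiJG hsm fun X hX => ?_
    exact mul_le_mul_of_nonneg_right (hJc₀ X (subset_closure hX)) (sq_nonneg _)
  have hA4 : c₀ ^ 2 * IZ2 ≤ 4 * IZt := by
    rw [hIZ2def, hIZtdef, ← integral_const_mul, ← integral_const_mul]
    refine setIntegral_mono_on (hiZ2.const_mul _) (hiZt2.const_mul _) hsm fun X hX => ?_
    have h1 := hplo X (subset_closure hX)
    have h2 : Zt X ^ 2 = Z X ^ 2 * p X ^ 2 := by simp only [hZtdef]; ring
    rw [h2]
    have h4 : c₀ ^ 2 ≤ 4 * p X ^ 2 := by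
      have h5 := pow_le_pow_left₀ hc₀pos.le (show c₀ ≤ 2 * p X by linarith only [h1]) 2
      linarith only [h5]
    calc c₀ ^ 2 * Z X ^ 2 ≤ (4 * p X ^ 2) * Z X ^ 2 :=
          mul_le_mul_of_nonneg_right h4 (sq_nonneg _)
      _ = 4 * (Z X ^ 2 * p X ^ 2) := by ring
  have hA7 : IZt ≤ 4 * c₁ ^ 2 * IZ2 := by
    rw [hIZ2def, hIZtdef, ← integral_const_mul]
    refine setIntegral_mono_on hiZt2 (hiZ2.const_mul _) hsm fun X hX => ?_
    have h1 := hphi X (subset_closure hX)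
    have h2 : Zt X ^ 2 = Z X ^ 2 * p X ^ 2 := by simp only [hZtdef]; ring
    rw [h2]
    have h4 : p X ^ 2 ≤ 4 * c₁ ^ 2 := by
      have h5 := pow_le_pow_left₀ (abs_nonneg (p X)) h1 2
      rw [sq_abs] at h5
      linarith only [h5]
    calc Z X ^ 2 * p X ^ 2 ≤ Z X ^ 2 * (4 * c₁ ^ 2) :=
          mul_le_mul_of_nonneg_left h4 (sq_nonneg _)
      _ = 4 * c₁ ^ 2 * Z X ^ 2 := by ring
  have hA8 : Igr ≤ 2 * MP ^ 2 * IZ2 + 8 * c₁ ^ 2 * MΦ ^ 2 * IG := by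
    have h1 : Igr ≤ ∫ X in D.Ω₀, (2 * MP ^ 2 * Z X ^ 2 + 8 * c₁ ^ 2 * MΦ ^ 2 * G X) :=
      setIntegral_mono_on hiZtgrad ((hiZ2.const_mul _).add (hiG.const_mul _)) hsm
        fun X hX => hgradbound X hX
    rwa [integral_add (hiZ2.const_mul _) (hiG.const_mul _),
      integral_const_mul, integral_const_mul, ← hIZ2def, ← hIGdef] at h1
  -- the coefficient estimate
  set fdiff : EuclideanSpace ℝ (Fin n) → ℝ := fun X => Z X * (p X - J X) with hfdiffdef
  have hpJmeas : AEStronglyMeasurable (fun X => p X - J X) (volume.restrict D.Ω₀) :=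
    ((hpcont.continuousOn.sub hJcont).aemeasurable hsm).aestronglyMeasurable
  have hifdiff : IntegrableOn fdiff D.Ω₀ :=
    hmul Z _ η hiZ hpJmeas fun X hX => hpJ X (subset_closure hX)
  have hifdiff2 : IntegrableOn (fun X => fdiff X ^ 2) D.Ω₀ := by
    have h1 : IntegrableOn (fun X => Z X ^ 2 * (p X - J X) ^ 2) D.Ω₀ := by
      refine hmul (fun X => Z X ^ 2) (fun X => (p X - J X) ^ 2) (η ^ 2) hiZ2
        (((hpcont.continuousOn.sub hJcont).pow 2).aemeasurable hsm).aestronglyMeasurable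
        fun X hX => ?_
      rw [abs_pow]
      exact pow_le_pow_left₀ (abs_nonneg _) (hpJ X (subset_closure hX)) 2
    exact h1.congr (ae_of_all _ fun X => by simp only [hfdiffdef]; ring)
  have hifw : ∀ k, IntegrableOn (fun X => fdiff X * w k X) D.Ω₀ := by
    intro k
    obtain ⟨Ck, hCk⟩ := hwbdd k
    exact hmul fdiff (w k) Ck hifdiff (hwmeas k) fun X hX => hCk X (subset_closure hX)
  have hbessel : ∑ k ∈ Finset.range K, (∫ X in D.Ω₀, fdiff X * w k X) ^ 2 ≤
      ∫ X in D.Ω₀, fdiff X ^ 2 :=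
    bessel_aux (volume.restrict D.Ω₀) w fdiff K horth hifdiff2 hifw hww
  have hfd2 : (∫ X in D.Ω₀, fdiff X ^ 2) ≤ η ^ 2 * IZ2 := by
    rw [hIZ2def, ← integral_const_mul]
    refine setIntegral_mono_on hifdiff2 (hiZ2.const_mul _) hsm fun X hX => ?_
    have h3 : (p X - J X) ^ 2 ≤ η ^ 2 := by
      rw [← sq_abs]
      exact pow_le_pow_left₀ (abs_nonneg _) (hpJ X (subset_closure hX)) 2
    have h2 : fdiff X ^ 2 = (p X - J X) ^ 2 * Z X ^ 2 := by simp only [hfdiffdef]; ring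
    rw [h2]
    exact mul_le_mul_of_nonneg_right h3 (sq_nonneg _)
  have hiZJw : ∀ k, IntegrableOn (fun X => Z X * w k X * J X) D.Ω₀ := by
    intro k
    obtain ⟨Ck, hCk⟩ := hwbdd k
    refine hmul (fun X => Z X * w k X) J c₁
      (hmul Z (w k) Ck hiZ (hwmeas k) fun X hX => hCk X (subset_closure hX))
      ((hJcont.aemeasurable hsm).aestronglyMeasurable) fun X hX => ?_
    rw [abs_abs]
    exact hJc₁ X (subset_closure hX)
  have hCoV3 : ∀ k, (∫ x in D.Ω t, ψ x * w k (Ψ t x)) =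
      ∫ X in D.Ω₀, Z X * w k X * J X := by
    intro k
    rw [hCoV (fun x => ψ x * w k (Ψ t x))]
    refine setIntegral_congr_fun hsm fun X hX => ?_
    have h1 : Ψ t (D.Φ t X) = X := hΨ t ht X (subset_closure hX)
    simp only [hZdef, h1]
    ring
  have hA56 : ∑ k ∈ Finset.range K, (∫ X in D.Ω₀, Zt X * w k X) ^ 2 ≤
      2 * S + 2 * (η ^ 2 * IZ2) := by
    have hsplit : ∀ k, (∫ X in D.Ω₀, Zt X * w k X) =
        (∫ X in D.Ω₀, Z X * w k X * J X) + ∫ X in D.Ω₀, fdiff X * w k X := by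
      intro k
      rw [← integral_add (hiZJw k) (hifw k)]
      refine setIntegral_congr_fun hsm fun X hX => ?_
      simp only [hZtdef, hfdiffdef]
      ring
    have h1 : ∀ k ∈ Finset.range K, (∫ X in D.Ω₀, Zt X * w k X) ^ 2 ≤
        2 * (∫ x in D.Ω t, ψ x * w k (Ψ t x)) ^ 2 +
          2 * (∫ X in D.Ω₀, fdiff X * w k X) ^ 2 := by
      intro k _
      rw [hsplit k, ← hCoV3 k]
      linarith only [sq_nonneg ((∫ x in D.Ω t, ψ x * w k (Ψ t x)) -
        ∫ X in D.Ω₀, fdiff X * w k X)]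
    calc ∑ k ∈ Finset.range K, (∫ X in D.Ω₀, Zt X * w k X) ^ 2
        ≤ ∑ k ∈ Finset.range K, (2 * (∫ x in D.Ω t, ψ x * w k (Ψ t x)) ^ 2 +
            2 * (∫ X in D.Ω₀, fdiff X * w k X) ^ 2) := Finset.sum_le_sum h1
      _ = 2 * S + 2 * ∑ k ∈ Finset.range K, (∫ X in D.Ω₀, fdiff X * w k X) ^ 2 := by
          rw [Finset.sum_add_distrib, ← Finset.mul_sum, ← Finset.mul_sum]
      _ ≤ 2 * S + 2 * (η ^ 2 * IZ2) := by
          have h9 := hbessel.trans hfd2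
          linarith only [h9]
  have hkey : IZt ≤ (2 * S + 2 * (η ^ 2 * IZ2)) + ε' * (IZt + Igr) :=
    le_trans key (add_le_add hA56 (le_refl _))
  -- arithmetic assembly
  have hm3 : c₀ * IZt ≤ 2 * c₀ * S + 2 * η ^ 2 * N +
      ε' * ((4 * c₁ ^ 2 + 2 * MP ^ 2) * N + 8 * c₁ ^ 2 * MΦ ^ 2 * gr) := by
    have h1 : IZt ≤ 2 * S + 2 * (η ^ 2 * IZ2) +
        ε' * ((4 * c₁ ^ 2 * IZ2) + (2 * MP ^ 2 * IZ2 + 8 * c₁ ^ 2 * MΦ ^ 2 * IG)) := by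
      have h2 := mul_le_mul_of_nonneg_left (add_le_add hA7 hA8) hε'pos.le
      linarith only [hkey, h2]
    have h3 := mul_le_mul_of_nonneg_left h1 hc₀pos.le
    have t1 : 2 * η ^ 2 * (c₀ * IZ2) ≤ 2 * η ^ 2 * N :=
      mul_le_mul_of_nonneg_left hA1 (by positivity)
    have t2 : ε' * ((4 * c₁ ^ 2 + 2 * MP ^ 2) * (c₀ * IZ2)) ≤
        ε' * ((4 * c₁ ^ 2 + 2 * MP ^ 2) * N) := by
      refine mul_le_mul_of_nonneg_left ?_ hε'pos.le
      refine mul_le_mul_of_nonneg_left hA1 ?_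
      positivity
    have t3 : ε' * (8 * c₁ ^ 2 * MΦ ^ 2 * (c₀ * IG)) ≤
        ε' * (8 * c₁ ^ 2 * MΦ ^ 2 * gr) := by
      refine mul_le_mul_of_nonneg_left ?_ hε'pos.le
      refine mul_le_mul_of_nonneg_left hA3 ?_
      positivity
    linarith only [h3, t1, t2, t3]
  have hm1 : c₀ ^ 2 * N ≤ 4 * c₁ * IZt := by
    have h1 := mul_le_mul_of_nonneg_left hA2 (sq_nonneg c₀)
    have h2 := mul_le_mul_of_nonneg_left hA4 hc₁pos.le
    linarith only [h1, h2]
  have hTR1 : 4 * c₁ * (4 * c₁ ^ 2 + 2 * MP ^ 2) ≤ R := by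
    rw [hRdef]
    have nn : (0:ℝ) ≤ 32 * c₁ ^ 3 * MΦ ^ 2 :=
      mul_nonneg (mul_nonneg (by norm_num) (pow_nonneg hc₁pos.le 3)) (sq_nonneg MΦ)
    linarith only [nn]
  have hTR2 : 32 * c₁ ^ 3 * MΦ ^ 2 ≤ R := by
    rw [hRdef]
    have nn : (0:ℝ) ≤ 4 * c₁ * (4 * c₁ ^ 2 + 2 * MP ^ 2) :=
      mul_nonneg (by linarith only [hc₁pos]) (by positivity)
    linarith only [nn]
  have hεR1 : ε' * (4 * c₁ * (4 * c₁ ^ 2 + 2 * MP ^ 2)) ≤ c₀ ^ 3 / 4 * min 1 ε := by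
    rw [hε'def, div_mul_eq_mul_div, div_le_iff₀ hRpos]
    exact mul_le_mul_of_nonneg_left hTR1 (mul_nonneg (by positivity) hminpos.le)
  have hεR2 : ε' * (32 * c₁ ^ 3 * MΦ ^ 2) ≤ c₀ ^ 3 / 4 * min 1 ε := by
    rw [hε'def, div_mul_eq_mul_div, div_le_iff₀ hRpos]
    exact mul_le_mul_of_nonneg_left hTR2 (mul_nonneg (by positivity) hminpos.le)
  have hfinal : c₀ ^ 3 * N ≤ 8 * c₁ * c₀ * S + c₀ ^ 3 / 4 * N + c₀ ^ 3 / 4 * N +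
      c₀ ^ 3 / 4 * ε * gr := by
    have h1 := mul_le_mul_of_nonneg_left hm1 hc₀pos.le
    have h2 := mul_le_mul_of_nonneg_left hm3 (by linarith : (0:ℝ) ≤ 4 * c₁)
    have h3 : 4 * c₁ * (2 * η ^ 2 * N) ≤ c₀ ^ 3 / 4 * N := by
      have h9 := mul_le_mul_of_nonneg_right hη2 hN0
      linarith only [h9]
    have h4 : 4 * c₁ * (ε' * ((4 * c₁ ^ 2 + 2 * MP ^ 2) * N)) ≤ c₀ ^ 3 / 4 * N := by
      have h9 := mul_le_mul_of_nonneg_right hεR1 hN0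
      have h10 := mul_le_mul_of_nonneg_right hmin1
        (mul_nonneg (by positivity : (0:ℝ) ≤ c₀ ^ 3 / 4) hN0)
      linarith only [h9, h10]
    have h5 : 4 * c₁ * (ε' * (8 * c₁ ^ 2 * MΦ ^ 2 * gr)) ≤ c₀ ^ 3 / 4 * ε * gr := by
      have h9 := mul_le_mul_of_nonneg_right hεR2 hgr0
      have h10 := mul_le_mul_of_nonneg_right hminε
        (mul_nonneg (by positivity : (0:ℝ) ≤ c₀ ^ 3 / 4) hgr0)
      linarith only [h9, h10]
    linarith only [h1, h2, h3, h4, h5]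
  have hCC3 : c₀ ^ 3 * ((16 * c₁ / c₀ ^ 2 + 1) * (S + ε * (N + gr))) =
      (16 * c₁ * c₀ + c₀ ^ 3) * (S + ε * (N + gr)) := by
    rw [← mul_assoc]
    congr 1
    field_simp
  have h8 : c₀ ^ 3 * N ≤ c₀ ^ 3 * ((16 * c₁ / c₀ ^ 2 + 1) * (S + ε * (N + gr))) := by
    rw [hCC3]
    have s1 : 0 ≤ c₀ ^ 3 * S := mul_nonneg (by positivity) hS0
    have s2 : 0 ≤ 16 * c₁ * c₀ * (ε * N) :=
      mul_nonneg (by positivity) (mul_nonneg hε.le hN0)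
    have s3 : 0 ≤ 16 * c₁ * c₀ * (ε * gr) :=
      mul_nonneg (by positivity) (mul_nonneg hε.le hgr0)
    have s4 : 0 ≤ c₀ ^ 3 * (ε * N) := mul_nonneg (by positivity) (mul_nonneg hε.le hN0)
    have s5 : 0 ≤ c₀ ^ 3 * (ε * gr) := mul_nonneg (by positivity) (mul_nonneg hε.le hgr0)
    have s5 : 0 ≤ c₀ ^ 3 * (ε * gr) := mul_nonneg (by positivity) (mul_nonneg hε.le hgr0)
    linarith only [hfinal, s1, s2, s3, s4, s5]
  exact le_of_mul_le_mul_left h8 (by positivity)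
end
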